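/- Consider the alternating sequences for the equation X + A^H f(X)^{-1} A = Q, assume they are well defined (all matrices f(Q) − B_h^(k) and Q − B^(k) are invertible), and let X_M be a Hermitian positive definite solution of X + A^H f(X)^{-1} A = Q such that X_M − B^(k) and f(X_M) − B_h^(k) are invertible for all k ≥ 1. Define T_k = (X_M − B^(k))^{-1} A^(k) and T_h^(k) = (f(X_M) − B_h^(k))^{-1} A_h^(k). Then for all integers i, j, k ≥ 1: T_{i+j−1} = f(T_h^(i)) T_h^(j), T_h^(i+j) = T_h^(i) T_j, and consequently T_h^(i+j+k−1) = T_h^(k) f(T_h^(i)) T_h^(j); in particular T_h^(k) = T_h^(1) T_1^{k−1} for every k ≥ 1. -/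

import Mathlib

open Matrix Filter Topology
open scoped ComplexOrder

noncomputable section

/-- Square complex matrices of size `n`. -/
abbrev Mat (n : ℕ) := Matrix (Fin n) (Fin n) ℂ

/-- An operator `f` on complex `n × n` matrices is *admissible* if it satisfies
(a1) `f (f X) = X`, (a2) additivity, (a3) multiplicativity, and
(a4) `f X` is positive semidefinite whenever `X` is. -/
def Admissible {n : ℕ} (f : Mat n → Mat n) : Prop :=
  (∀ X, f (f X) = X) ∧
  (∀ X Y, f (X + Y) = f X + f Y) ∧
  (∀ X Y, f (X * Y) = f X * f Y) ∧
  (∀ X, X.PosSemidef → (f X).PosSemidef)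

/-- One step of the alternating iteration producing `(A⁽ᵏ⁾, B⁽ᵏ⁾, Q⁽ᵏ⁾)` from
`(A_h⁽ᵏ⁾, B_h⁽ᵏ⁾, Q_h⁽ᵏ⁾)` (plus-sign equation). -/
def altStepS {n : ℕ} (f : Mat n → Mat n) (A Q : Mat n) (h : Mat n × Mat n × Mat n) :
    Mat n × Mat n × Mat n :=
  (f A * (f Q - h.2.1)⁻¹ * h.1,
   f A * (f Q - h.2.1)⁻¹ * (f A)ᴴ,
   h.2.2 - h.1ᴴ * (f Q - h.2.1)⁻¹ * h.1)

/-- One step of the alternating iteration producing `(A_h⁽ᵏ⁺¹⁾, B_h⁽ᵏ⁺¹⁾, Q_h⁽ᵏ⁺¹⁾)`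
from `(A⁽ᵏ⁾, B⁽ᵏ⁾, Q⁽ᵏ⁾)` (plus-sign equation). -/
def altStepH {n : ℕ} (A Q : Mat n) (s : Mat n × Mat n × Mat n) : Mat n × Mat n × Mat n :=
  (A * (Q - s.2.1)⁻¹ * s.1,
   A * (Q - s.2.1)⁻¹ * Aᴴ,
   s.2.2 - s.1ᴴ * (Q - s.2.1)⁻¹ * s.1)

/-- The half-index alternating sequence: `altH f A Q k` is the paper's
`(A_{1/2}^{(k+1)}, B_{1/2}^{(k+1)}, Q_{1/2}^{(k+1)})`, starting from `(A, 0, Q)`. -/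
def altH {n : ℕ} (f : Mat n → Mat n) (A Q : Mat n) : ℕ → Mat n × Mat n × Mat n
  | 0 => (A, 0, Q)
  | k + 1 => altStepH A Q (altStepS f A Q (altH f A Q k))

/-- The whole-index alternating sequence: `altS f A Q k` is the paper's
`(A^{(k+1)}, B^{(k+1)}, Q^{(k+1)})` of the alternating iteration. -/
def altS {n : ℕ} (f : Mat n → Mat n) (A Q : Mat n) (k : ℕ) : Mat n × Mat n × Mat n :=
  altStepS f A Q (altH f A Q k)

/-!
An admissible `f` is a ring automorphism of `Mat n` preserving positive semidefiniteness; such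
a map commutes with inverses and with `ᴴ`, so applying it to the equation for `X_M` gives
`f Q - f X_M = (f A)ᴴ X_M⁻¹ f A`. As `(Q - B^(k)) - (X_M - B^(k)) = Q - X_M` does not depend on
`k` (and likewise for `f Q - B_h^(k)`), a Woodbury-type identity turns the two recursions into
`T_k = f(T_h^(1)) T_h^(k)` and `T_h^(k+1) = T_h^(1) T_k`. With `P = T_h^(1)` this gives
`T_h^(k) = (P f(P))^(k-1) P`, and every stated relation is a rearrangement of powers in this
closed form.
-/

theorem Matrix.map_nonsing_inv_of_isUnit {m m' R R' F : Type*} [Fintype m] [DecidableEq m]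
    [Fintype m'] [DecidableEq m'] [CommRing R] [CommRing R']
    [FunLike F (Matrix m m R) (Matrix m' m' R')]
    [MonoidHomClass F (Matrix m m R) (Matrix m' m' R')]
    (φ : F) {X : Matrix m m R} (hX : IsUnit X) : φ X⁻¹ = (φ X)⁻¹ := by
  refine (inv_eq_right_inv ?_).symm
  rw [← map_mul, X.mul_nonsing_inv ((isUnit_iff_isUnit_det X).mp hX), map_one]

theorem Matrix.inv_sub_mul_inv_mul_eq {m R : Type*} [Fintype m] [DecidableEq m] [CommRing R]
    {S M W C D : Matrix m m R} (hS : IsUnit S) (hM : IsUnit M) (hW : IsUnit W)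
    (hWM : W - M = D * S⁻¹ * C) (hSW : IsUnit (S - C * W⁻¹ * D)) (Z : Matrix m m R) :
    (S - C * W⁻¹ * D)⁻¹ * (C * W⁻¹ * Z) = S⁻¹ * C * (M⁻¹ * Z) := by
  have hEM : (S - C * W⁻¹ * D) * (S⁻¹ * C * M⁻¹) = C * W⁻¹ := by
    calc (S - C * W⁻¹ * D) * (S⁻¹ * C * M⁻¹)
        = S * S⁻¹ * C * M⁻¹ - C * W⁻¹ * (D * S⁻¹ * C) * M⁻¹ := by noncomm_ring
      _ = C * M⁻¹ - C * (W⁻¹ * W) * M⁻¹ + C * W⁻¹ * (M * M⁻¹) := by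
          rw [S.mul_nonsing_inv ((isUnit_iff_isUnit_det S).mp hS), ← hWM]; noncomm_ring
      _ = C * W⁻¹ := by
          rw [W.nonsing_inv_mul ((isUnit_iff_isUnit_det W).mp hW),
            M.mul_nonsing_inv ((isUnit_iff_isUnit_det M).mp hM)]; noncomm_ring
  calc (S - C * W⁻¹ * D)⁻¹ * (C * W⁻¹ * Z)
      = (S - C * W⁻¹ * D)⁻¹ * ((S - C * W⁻¹ * D) * (S⁻¹ * C * M⁻¹ * Z)) := by
        rw [← Matrix.mul_assoc (S - C * W⁻¹ * D), hEM]
    _ = S⁻¹ * C * (M⁻¹ * Z) := by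
        rw [← Matrix.mul_assoc, nonsing_inv_mul _ ((isUnit_iff_isUnit_det _).mp hSW),
          Matrix.one_mul, Matrix.mul_assoc]

open scoped MatrixOrder in
theorem Matrix.IsHermitian.map_of_posSemidef {m 𝕜 F : Type*} [Fintype m] [DecidableEq m]
    [RCLike 𝕜] [FunLike F (Matrix m m 𝕜) (Matrix m m 𝕜)]
    [AddMonoidHomClass F (Matrix m m 𝕜) (Matrix m m 𝕜)] (φ : F)
    (hφ : ∀ X : Matrix m m 𝕜, X.PosSemidef → (φ X).PosSemidef) {H : Matrix m m 𝕜}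
    (hH : H.IsHermitian) : (φ H).IsHermitian := by
  rw [← CFC.posPart_sub_negPart H hH.isSelfAdjoint, map_sub]
  exact (hφ _ (CFC.posPart_nonneg H).posSemidef).isHermitian.sub
    (hφ _ (CFC.negPart_nonneg H).posSemidef).isHermitian

namespace RingEquiv

variable {m : Type*} [Fintype m] [DecidableEq m] (φ : Matrix m m ℂ ≃+* Matrix m m ℂ)

/-- `φ (I • 1)` is central with square `-1`, hence `± I • 1`. -/
theorem conjTranspose_map_I_smul_one : (φ (Complex.I • 1))ᴴ = -φ (Complex.I • 1) := by
  cases isEmpty_or_nonempty m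
  · exact Subsingleton.elim _ _
  obtain ⟨c, hc⟩ : φ (Complex.I • 1) ∈ Set.range (scalar m) := by
    rw [← center_eq_range]
    exact MulEquivClass.apply_mem_center φ (Set.smul_mem_center _ Set.one_mem_center)
  rw [scalar_apply, ← smul_one_eq_diagonal] at hc
  have hc2 : c * c = -1 := by
    have h : φ (Complex.I • 1) * φ (Complex.I • 1) = -1 := by
      rw [← map_mul, smul_one_mul, smul_smul, Complex.I_mul_I, neg_smul, one_smul, map_neg,
        map_one]
    rw [← hc, smul_one_mul, smul_smul, ← neg_one_smul ℂ (1 : Matrix m m ℂ)] at h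
    exact smul_left_injective ℂ one_ne_zero h
  have hstar : star c = -c := by
    have hroots : (c - Complex.I) * (c + Complex.I) = 0 := by
      linear_combination hc2 - Complex.I_sq
    rcases mul_eq_zero.mp hroots with h | h
    · simp [sub_eq_zero.mp h]
    · simp [eq_neg_of_add_eq_zero_left h]
  rw [← hc, conjTranspose_smul, conjTranspose_one, hstar, neg_smul]

theorem map_conjTranspose_of_posSemidef
    (hφ : ∀ X : Matrix m m ℂ, X.PosSemidef → (φ X).PosSemidef) (X : Matrix m m ℂ) :
    φ Xᴴ = (φ X)ᴴ := by
  set J : Matrix m m ℂ := Complex.I • 1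
  obtain ⟨H, K, hH, hK, rfl⟩ :
      ∃ H K : Matrix m m ℂ, H.IsHermitian ∧ K.IsHermitian ∧ X = H + J * K :=
    ⟨realPart X, imaginaryPart X, (realPart X).2, (imaginaryPart X).2,
      by rw [smul_one_mul, realPart_add_I_smul_imaginaryPart]⟩
  have hJ : Jᴴ = -J := by simp [J]
  rw [conjTranspose_add, conjTranspose_mul, hH.eq, hK.eq, hJ, mul_neg, ← sub_eq_add_neg,
    map_sub, map_add, map_mul, map_mul, conjTranspose_add, conjTranspose_mul,
    (hH.map_of_posSemidef φ hφ).eq, (hK.map_of_posSemidef φ hφ).eq,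
    φ.conjTranspose_map_I_smul_one, mul_neg, sub_eq_add_neg]

end RingEquiv

theorem relations_of_alternating_recursion {M : Type*} [Monoid M] (φ : M →* M)
    (hφ : Function.Involutive φ) (T Th : ℕ → M) (hT : ∀ k, T k = φ (Th 0) * Th k)
    (hTh : ∀ k, Th (k + 1) = Th 0 * T k) :
    (∀ i j : ℕ, T (i + j) = φ (Th i) * Th j) ∧
    (∀ i j : ℕ, Th (i + j + 1) = Th i * T j) ∧
    (∀ i j k : ℕ, Th (i + j + k + 1) = Th k * φ (Th i) * Th j) ∧
    (∀ k : ℕ, Th k = Th 0 * T 0 ^ k) := by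
  set P := Th 0
  have hTh_eq (k : ℕ) : Th k = (P * φ P) ^ k * P := by
    induction k with
    | zero => simp [P]
    | succ k ih => rw [hTh, hT, ih, pow_succ']; simp only [mul_assoc]
  have hφTh_eq (k : ℕ) : φ (Th k) = φ P * (P * φ P) ^ k := by
    rw [hTh_eq, map_mul, map_pow, map_mul, hφ, mul_pow_mul]
  refine ⟨fun i j => ?_, fun i j => ?_, fun i j k => ?_, fun k => ?_⟩
  · rw [hT, hφTh_eq i, hTh_eq (i + j), hTh_eq j, pow_add]
    simp only [mul_assoc]
  · rw [hTh_eq (i + j + 1), hTh_eq i, hT, hTh_eq j, add_assoc, pow_add, pow_succ']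
    simp only [mul_assoc]
  · rw [hTh_eq (i + j + k + 1), hTh_eq k, hφTh_eq i, hTh_eq j,
      show i + j + k + 1 = k + (i + j + 1) by omega, pow_add, pow_succ', pow_add]
    simp only [mul_assoc]
  · rw [hTh_eq k, hT, hTh_eq 0, pow_zero, one_mul, mul_pow_mul]

def Admissible.toRingEquiv {n : ℕ} {f : Mat n → Mat n} (hf : Admissible f) :
    Mat n ≃+* Mat n :=
  { Function.Involutive.toPerm f hf.1 with
    map_mul' := hf.2.2.1
    map_add' := hf.2.1 }

/-- All indices are the paper's shifted down by one. -/
theorem stmt_19_general {n : ℕ} (f : Mat n → Mat n) (hf : Admissible f)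
    (A Q : Mat n)
    (hinv1 : ∀ k, IsUnit (f Q - (altH f A Q k).2.1))
    (hinv2 : ∀ k, IsUnit (Q - (altS f A Q k).2.1))
    (XM : Mat n) (hsol : XM + Aᴴ * (f XM)⁻¹ * A = Q)
    (hinv3 : ∀ k, IsUnit (XM - (altS f A Q k).2.1))
    (hinv4 : ∀ k, IsUnit (f XM - (altH f A Q k).2.1))
    (T Th : ℕ → Mat n)
    (hT : ∀ k, T k = (XM - (altS f A Q k).2.1)⁻¹ * (altS f A Q k).1)
    (hTh : ∀ k, Th k = (f XM - (altH f A Q k).2.1)⁻¹ * (altH f A Q k).1) :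
    (∀ i j : ℕ, T (i + j) = f (Th i) * Th j) ∧
    (∀ i j : ℕ, Th (i + j + 1) = Th i * T j) ∧
    (∀ i j k : ℕ, Th (i + j + k + 1) = Th k * f (Th i) * Th j) ∧
    (∀ k : ℕ, Th k = Th 0 * T 0 ^ k) := by
  obtain ⟨φ, rfl⟩ : ∃ φ : Mat n ≃+* Mat n, ⇑φ = f := ⟨hf.toRingEquiv, rfl⟩
  obtain ⟨hinvol, -, -, hpsd⟩ := hf
  have hfXM : IsUnit (φ XM) := by simpa [altH] using hinv4 0
  have hXM : IsUnit XM := by simpa [hinvol XM] using hfXM.map φ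
  have hQXM : Q - XM = Aᴴ * (φ XM)⁻¹ * A := by rw [← hsol, add_sub_cancel_left]
  have hfQXM : φ Q - φ XM = (φ A)ᴴ * XM⁻¹ * φ A := by
    rw [← map_sub, hQXM, map_mul, map_mul, φ.map_conjTranspose_of_posSemidef hpsd,
      map_nonsing_inv_of_isUnit φ hfXM, hinvol]
  have hTh0 : Th 0 = (φ XM)⁻¹ * A := by simp [hTh, altH]
  have hT_eq (k : ℕ) : T k = φ (Th 0) * Th k := by
    rw [hT, hTh0, map_mul, map_nonsing_inv_of_isUnit φ hfXM, hinvol, hTh]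
    exact inv_sub_mul_inv_mul_eq hXM (hinv4 k) (hinv1 k)
      (by rw [sub_sub_sub_cancel_right, hfQXM]) (hinv3 k) _
  have hTh_succ (k : ℕ) : Th (k + 1) = Th 0 * T k := by
    rw [hTh (k + 1), hT, hTh0]
    exact inv_sub_mul_inv_mul_eq hfXM (hinv3 k) (hinv2 k)
      (by rw [sub_sub_sub_cancel_right, hQXM]) (hinv4 (k + 1)) _
  exact relations_of_alternating_recursion φ.toMonoidHom hinvol T Th hT_eq hTh_succ

/-- the relations between `T_k` and the half-index `T_h^{(k)}` for the
alternating iteration: `T_{i+j-1} = f(T_h^{(i)}) T_h^{(j)}`, `T_h^{(i+j)} = T_h^{(i)} T_j`,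
`T_h^{(i+j+k-1)} = T_h^{(k)} f(T_h^{(i)}) T_h^{(j)}` and `T_h^{(k)} = T_h^{(1)} T_1^{k-1}`
(all indices here are the paper's shifted by one). -/
theorem stmt_19 {n : ℕ} (f : Mat n → Mat n) (hf : Admissible f)
    (A Q : Mat n) (hQ : Q.PosDef)
    (hinv1 : ∀ k, IsUnit (f Q - (altH f A Q k).2.1))
    (hinv2 : ∀ k, IsUnit (Q - (altS f A Q k).2.1))
    (XM : Mat n) (hXM : XM.PosDef) (hsol : XM + Aᴴ * (f XM)⁻¹ * A = Q)
    (hinv3 : ∀ k, IsUnit (XM - (altS f A Q k).2.1))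
    (hinv4 : ∀ k, IsUnit (f XM - (altH f A Q k).2.1))
    (T Th : ℕ → Mat n)
    (hT : ∀ k, T k = (XM - (altS f A Q k).2.1)⁻¹ * (altS f A Q k).1)
    (hTh : ∀ k, Th k = (f XM - (altH f A Q k).2.1)⁻¹ * (altH f A Q k).1) :
    (∀ i j : ℕ, T (i + j) = f (Th i) * Th j) ∧
    (∀ i j : ℕ, Th (i + j + 1) = Th i * T j) ∧
    (∀ i j k : ℕ, Th (i + j + k + 1) = Th k * f (Th i) * Th j) ∧
    (∀ k : ℕ, Th k = Th 0 * T 0 ^ k) :=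
  stmt_19_general f hf A Q hinv1 hinv2 XM hsol hinv3 hinv4 T Th hT hTh
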